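/- Let G be a signed graph whose underlying simple graph G̃⁺ = G⁺∪G⁻ is complete. If G satisfies conditions (I) and (III), then the simple graph of double edges G̃⁻ = G⁺∩G⁻ is a threshold graph. -/

import Mathlib

open scoped Classical

universe u v

/-! ## Signed graphs -/

/-- A signed graph: a pair of simple graphs (positive and negative parts) on a common
vertex set. -/
structure SignedGraph (V : Type u) where
  pos : SimpleGraph V
  neg : SimpleGraph V

namespace SignedGraph

variable {V : Type u}

/-- Adjacency by an edge of a given sign (`true` = negative edge, `false` = positive edge). -/
def EdgeAdj (G : SignedGraph V) (s : Bool) (u v : V) : Prop :=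
  cond s (G.neg.Adj u v) (G.pos.Adj u v)

/-- A cycle of a signed graph: distinct vertices `vert 0, …, vert (n-1)` (`n ≥ 3`) with an
edge of sign `sgn i` between `vert i` and `vert ((i+1) % n)` for each `i < n`. -/
structure Cycle (G : SignedGraph V) where
  n : ℕ
  three_le : 3 ≤ n
  vert : ℕ → V
  inj : ∀ i j, i < n → j < n → vert i = vert j → i = j
  sgn : ℕ → Bool
  adj : ∀ i, i < n → G.EdgeAdj (sgn i) (vert i) (vert ((i + 1) % n))

/-- A cycle is balanced if it uses an even number of negative edges. -/
def Cycle.Balanced {G : SignedGraph V} (C : G.Cycle) : Prop :=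
  Even (((Finset.range C.n).filter fun i => C.sgn i = true).card)

/-- A chord of a cycle: an edge of `G` joining two non-consecutive vertices of the cycle. -/
def Cycle.IsChord {G : SignedGraph V} (C : G.Cycle) (i j : ℕ) : Prop :=
  i < C.n ∧ j < C.n ∧ i ≠ j ∧ j ≠ (i + 1) % C.n ∧ i ≠ (j + 1) % C.n ∧
    (G.pos.Adj (C.vert i) (C.vert j) ∨ G.neg.Adj (C.vert i) (C.vert j))

/-- The chord of sign `s` between positions `i < j` of the cycle `C` separates `C` into two
balanced cycles (for a balanced cycle it suffices that one of the two pieces is balanced). -/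
def Cycle.BalancedChordAt {G : SignedGraph V} (C : G.Cycle) (i j : ℕ) (s : Bool) : Prop :=
  i < j ∧ C.IsChord i j ∧ G.EdgeAdj s (C.vert i) (C.vert j) ∧
    Even ((((Finset.Ico i j).filter fun k => C.sgn k = true).card) + cond s 1 0) ∧
    Even ((((Finset.range C.n \ Finset.Ico i j).filter fun k => C.sgn k = true).card)
      + cond s 1 0)

/-- The cycle has a balanced chord. -/
def Cycle.HasBalancedChord {G : SignedGraph V} (C : G.Cycle) : Prop :=
  ∃ i j s, C.BalancedChordAt i j s

/-- Condition (I): a signed graph is balanced chordal if every balanced cycle of length at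
least four has a balanced chord. -/
def BalancedChordal (G : SignedGraph V) : Prop :=
  ∀ C : G.Cycle, 4 ≤ C.n → C.Balanced → C.HasBalancedChord

/-- The cycle `C` is an induced subgraph of `G`: the only edges of `G` among its vertices are
the edges of the cycle, each single, with the sign it has in the cycle. -/
def Cycle.IsInduced {G : SignedGraph V} (C : G.Cycle) : Prop :=
  ∀ i j, i < C.n → j < C.n → ∀ s : Bool,
    (G.EdgeAdj s (C.vert i) (C.vert j) ↔
      ((j = (i + 1) % C.n ∧ C.sgn i = s) ∨ (i = (j + 1) % C.n ∧ C.sgn j = s)))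

/-- Condition (II): no induced subgraph of `G` is an unbalanced cycle (of length `≥ 3`). -/
def NoInducedUnbalancedCycle (G : SignedGraph V) : Prop :=
  ¬ ∃ C : G.Cycle, C.IsInduced ∧ ¬ C.Balanced

/-- Switching a signed graph by `ν : V → Bool`. -/
def switch (G : SignedGraph V) (ν : V → Bool) : SignedGraph V where
  pos := SimpleGraph.fromRel fun u w => if ν u = ν w then G.pos.Adj u w else G.neg.Adj u w
  neg := SimpleGraph.fromRel fun u w => if ν u = ν w then G.neg.Adj u w else G.pos.Adj u w

/-- `G` contains an induced copy of the signed graph `H`. -/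
def HasInducedCopy {W : Type v} (G : SignedGraph V) (H : SignedGraph W) : Prop :=
  ∃ f : W → V, Function.Injective f ∧
    (∀ a b : W, G.pos.Adj (f a) (f b) ↔ H.pos.Adj a b) ∧
    (∀ a b : W, G.neg.Adj (f a) (f b) ↔ H.neg.Adj a b)

end SignedGraph

/-- The obstruction graph `G₀` of Figure 1: vertices `0,1,2,3` (= `1,2,3,4` in the paper),
double edges `{0,1}, {2,3}`, positive single edges `{0,3}, {1,3}, {1,2}`, negative single
edge `{0,2}`. -/
def obstruction : SignedGraph (Fin 4) where
  pos := SimpleGraph.fromRel fun a b =>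
    (a = 0 ∧ b = 1) ∨ (a = 2 ∧ b = 3) ∨ (a = 0 ∧ b = 3) ∨ (a = 1 ∧ b = 3) ∨ (a = 1 ∧ b = 2)
  neg := SimpleGraph.fromRel fun a b =>
    (a = 0 ∧ b = 1) ∨ (a = 2 ∧ b = 3) ∨ (a = 0 ∧ b = 2)

namespace SignedGraph

variable {V : Type u}

/-- Condition (III): no induced subgraph of `G` is switching equivalent to the obstruction
graph `G₀`. -/
def NoInducedObstruction (G : SignedGraph V) : Prop :=
  ¬ ∃ ν : Fin 4 → Bool, G.HasInducedCopy (obstruction.switch ν)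

/-- The signed graph `G̃ = (G⁺ ∪ G⁻, G⁺ ∩ G⁻)`. -/
def tilde (G : SignedGraph V) : SignedGraph V :=
  ⟨G.pos ⊔ G.neg, G.pos ⊓ G.neg⟩

/-- The induced subgraph of a signed graph on a set of vertices. -/
def induce (G : SignedGraph V) (W : Set V) : SignedGraph W :=
  ⟨SimpleGraph.induce W G.pos, SimpleGraph.induce W G.neg⟩

/-- A vertex `v` is link simplicial: for any two edges at `v` with distinct other endpoints
there is an edge making a balanced triangle with them. -/
def LinkSimplicial (G : SignedGraph V) (v : V) : Prop :=
  ∀ (u u' : V) (s s' : Bool), u ≠ u' → G.EdgeAdj s v u → G.EdgeAdj s' v u' →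
    ∃ s'' : Bool, G.EdgeAdj s'' u u' ∧
      Even ((cond s 1 0 + cond s' 1 0 + cond s'' 1 0 : ℕ))

/-- A link elimination ordering: an enumeration of the vertices such that each vertex is
link simplicial in the induced subgraph on it and its predecessors. -/
def HasLinkElimOrdering (G : SignedGraph V) [Fintype V] : Prop :=
  ∃ e : Fin (Fintype.card V) ≃ V, ∀ i : Fin (Fintype.card V),
    (G.induce {w : V | ∃ j, j ≤ i ∧ e j = w}).LinkSimplicial ⟨e i, ⟨i, le_refl i, rfl⟩⟩

/-- A complete signed graph `K±`: any two distinct vertices are joined by a double edge. -/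
def IsCompleteSigned (G : SignedGraph V) : Prop :=
  ∀ u v : V, u ≠ v → G.pos.Adj u v ∧ G.neg.Adj u v

end SignedGraph

/-- A threshold graph: it can be built from the one-vertex graph (more generally from the
empty graph) by successively adding isolated or dominating vertices; equivalently there is
an ordering of the vertices in which each vertex is isolated or dominating among its
predecessors. -/
def SimpleGraph.IsThresholdGraph {V : Type u} [Fintype V] (G : SimpleGraph V) : Prop :=
  ∃ e : Fin (Fintype.card V) ≃ V, ∀ i : Fin (Fintype.card V),
    (∀ j, j < i → ¬ G.Adj (e i) (e j)) ∨ (∀ j, j < i → G.Adj (e i) (e j))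

/-- A simple graph is chordal if every cycle of length at least four has a chord. -/
def SimpleGraph.IsChordalGraph {V : Type u} (G : SimpleGraph V) : Prop :=
  ∀ n : ℕ, 4 ≤ n → ∀ v : ℕ → V,
    (∀ i j, i < n → j < n → v i = v j → i = j) →
    (∀ i, i < n → G.Adj (v i) (v ((i + 1) % n))) →
    ∃ i j, i < j ∧ j < n ∧ j ≠ i + 1 ∧ ¬(i = 0 ∧ j = n - 1) ∧ G.Adj (v i) (v j)

/-! ## Hyperplane arrangements -/

noncomputable section Arrangements

/-- The signed-graphic arrangement `A(G)` in `K^V`, given by its defining linear forms: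
`x i` for each vertex, `x i - x j` for positive edges and `x i + x j` for negative edges. -/
def signedArr (K : Type u) [Field K] {V : Type v} [Fintype V] (G : SignedGraph V) :
    Finset ((V → K) →ₗ[K] K) :=
  (Finset.univ.image fun i : V => LinearMap.proj i)
    ∪ ((Finset.univ.filter fun p : V × V => G.pos.Adj p.1 p.2).image fun p =>
        (LinearMap.proj p.1 : (V → K) →ₗ[K] K) - LinearMap.proj p.2)
    ∪ ((Finset.univ.filter fun p : V × V => G.neg.Adj p.1 p.2).image fun p =>
        (LinearMap.proj p.1 : (V → K) →ₗ[K] K) + LinearMap.proj p.2)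

/-- The linear polynomial in `K[x_i : i ∈ V]` corresponding to a linear form on `K^V`. -/
def linToPoly (K : Type u) [Field K] {V : Type v} [Fintype V] (φ : (V → K) →ₗ[K] K) :
    MvPolynomial V K :=
  ∑ i : V, MvPolynomial.C (φ (Pi.single i 1)) * MvPolynomial.X i

/-- The module `D(A)` of logarithmic derivations of an arrangement given by linear forms. -/
def logDerModule (K : Type u) [Field K] {V : Type v} [Fintype V]
    (A : Finset ((V → K) →ₗ[K] K)) :
    Submodule (MvPolynomial V K) (Derivation K (MvPolynomial V K) (MvPolynomial V K)) where
  carrier := {θ | ∀ φ ∈ A, θ (linToPoly K φ) ∈ Ideal.span {linToPoly K φ}}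
  add_mem' := by
    intro θ η hθ hη φ hφ
    simpa using Ideal.add_mem _ (hθ φ hφ) (hη φ hφ)
  zero_mem' := by
    intro φ hφ
    simp
  smul_mem' := by
    intro c θ hθ φ hφ
    simpa [smul_eq_mul] using Ideal.mul_mem_left _ c (hθ φ hφ)

/-- An arrangement is free if its module of logarithmic derivations is free. -/
def ArrIsFree (K : Type u) [Field K] {V : Type v} [Fintype V]
    (A : Finset ((V → K) →ₗ[K] K)) : Prop :=
  Module.Free (MvPolynomial V K) (logDerModule K A)

/-- The intersection lattice: all intersections of subfamilies of a finite family of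
subspaces (the empty intersection being the whole space). -/
def interLattice (K : Type u) [Field K] {M : Type v} [AddCommGroup M] [Module K M]
    (H : Finset (Submodule K M)) : Finset (Submodule K M) :=
  H.powerset.image fun B => B.inf id

/-- The one-variable Möbius function of the intersection lattice `L` (ordered by reverse
inclusion): `μ(whole space) = 1` and `μ(X) = -∑_{Y < X} μ(Y)`. -/
def mobiusFn (K : Type u) [Field K] {M : Type v} [AddCommGroup M] [Module K M]
    [FiniteDimensional K M] (L : Finset (Submodule K M)) (X : Submodule K M) : ℤ :=
  if X = ⊤ then 1
  else - ∑ Y ∈ (L.filter fun Y => X < Y).attach, mobiusFn K L Y.1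
termination_by Module.finrank K M - Module.finrank K X
decreasing_by
  have h1 : X < Y.1 := (Finset.mem_filter.mp Y.2).2
  have h2 : Module.finrank K X < Module.finrank K Y.1 :=
    Submodule.finrank_lt_finrank_of_lt h1
  have h3 : Module.finrank K (Y.1 : Submodule K M) ≤ Module.finrank K M :=
    Submodule.finrank_le Y.1
  omega

/-- The characteristic polynomial `χ(A,t) = ∑_{X ∈ L(A)} μ(X) t^{dim X}` of an arrangement
given by its defining linear forms. -/
def arrCharPoly (K : Type u) [Field K] {M : Type v} [AddCommGroup M] [Module K M]
    [FiniteDimensional K M] (A : Finset (M →ₗ[K] K)) : Polynomial ℤ :=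
  ∑ X ∈ interLattice K (A.image LinearMap.ker),
    Polynomial.C (mobiusFn K (interLattice K (A.image LinearMap.ker)) X) *
      Polynomial.X ^ Module.finrank K X

/-- The restriction `A^H` of the arrangement `A` to the hyperplane `H = ker φ`, given by
the restrictions of the defining forms of the hyperplanes other than `H`. -/
def restrArr (K : Type u) [Field K] {M : Type v} [AddCommGroup M] [Module K M]
    (A : Finset (M →ₗ[K] K)) (φ : M →ₗ[K] K) : Finset (↥(LinearMap.ker φ) →ₗ[K] K) :=
  (A.filter fun ψ => LinearMap.ker ψ ≠ LinearMap.ker φ).image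
    fun ψ => ψ ∘ₗ (LinearMap.ker φ).subtype

/-- Auxiliary fuelled definition of divisional freeness. -/
def DivFreeAux (K : Type u) [Field K] (n : ℕ) (M : Type v) [AddCommGroup M] [Module K M]
    [FiniteDimensional K M] (A : Finset (M →ₗ[K] K)) : Prop :=
  match n with
  | 0 => A = ∅
  | Nat.succ m => A = ∅ ∨ ∃ φ ∈ A, φ ≠ 0 ∧
      DivFreeAux K m ↥(LinearMap.ker φ) (restrArr K A φ) ∧
      arrCharPoly K (restrArr K A φ) ∣ arrCharPoly K A

/-- Divisional freeness: the empty arrangement is divisionally free, and `A` is divisionally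
free if some hyperplane `H ∈ A` has `A^H` divisionally free with `χ(A^H,t) ∣ χ(A,t)`.
(Each restriction drops the dimension by exactly one, so `finrank M` steps suffice.) -/
def ArrIsDivFree (K : Type u) [Field K] {M : Type v} [AddCommGroup M] [Module K M]
    [FiniteDimensional K M] (A : Finset (M →ₗ[K] K)) : Prop :=
  DivFreeAux K (Module.finrank K M) M A

/-- The meet of two elements in the intersection lattice ordered by reverse inclusion:
the smallest member of `L` containing both. -/
def latticeMeet (K : Type u) [Field K] {M : Type v} [AddCommGroup M] [Module K M]
    (L : Finset (Submodule K M)) (x y : Submodule K M) : Submodule K M :=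
  (L.filter fun z => x ≤ z ∧ y ≤ z).inf id

/-- `m` is a modular element of the intersection lattice `L` (ordered by reverse
inclusion): for all `a ≤ b` in `L`, `a ∨ (m ∧ b) = (a ∨ m) ∧ b`. -/
def ModularIn (K : Type u) [Field K] {M : Type v} [AddCommGroup M] [Module K M]
    (L : Finset (Submodule K M)) (m : Submodule K M) : Prop :=
  m ∈ L ∧ ∀ a ∈ L, ∀ b ∈ L, b ≤ a →
    a ⊓ latticeMeet K L m b = latticeMeet K L (a ⊓ m) b

/-- An arrangement is supersolvable if its intersection lattice has a maximal chain of
modular elements. -/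
def ArrSupersolvable (K : Type u) [Field K] {M : Type v} [AddCommGroup M] [Module K M]
    (A : Finset (M →ₗ[K] K)) : Prop :=
  ∃ C : Set (Submodule K M),
    C ⊆ ↑(interLattice K (A.image LinearMap.ker)) ∧
    IsChain (· ≤ ·) C ∧
    (∀ C' : Set (Submodule K M),
        C' ⊆ ↑(interLattice K (A.image LinearMap.ker)) → IsChain (· ≤ ·) C' → C ⊆ C' →
          C' = C) ∧
    ∀ m ∈ C, ModularIn K (interLattice K (A.image LinearMap.ker)) m

end Arrangements

/-!
The double edges form a threshold graph as soon as their vicinal preorder (`u ≼ v` iff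
`N(u) ⊆ N[v]`) is total: a top element of a vertex set is then dominating in it, or else a
vertex it misses is isolated in it, and peeling off such vertices yields the threshold ordering.

If totality failed for `u, v`, there would be `x ∈ N(u) \ N[v]` and `y ∈ N(v) \ N[u]`, so `ux`
and `vy` are double while `uy` and `xv` are single. Balanced chordality, applied to the square
`u x y v` with the double sides signed so that no chord is balanced, forces the signs of `uy`,
`xy`, `xv`, `vu` to have odd parity. This rules out a double `xy` or `vu` (it could be taken with
either sign), and when both are single the four vertices induce a switching of `G₀`.
-/

namespace SimpleGraph

variable {V : Type*} (G : SimpleGraph V)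

def VicinalLE (u v : V) : Prop :=
  ∀ w, w ≠ v → G.Adj u w → G.Adj v w

variable {G}

lemma VicinalLE.trans {u v t : V} (huv : G.VicinalLE u v) (hvt : G.VicinalLE v t) :
    G.VicinalLE u t := by
  intro w hwt huw
  by_cases hwv : w = v
  · subst hwv
    by_cases hut : u = t
    · exact hut ▸ huw
    · exact (huv t (Ne.symm hwt) (hvt u hut huw.symm).symm).symm
  · exact hvt w hwt (huv w hwv huw)

lemma exists_isolated_or_dominating (htot : ∀ u v, G.VicinalLE u v ∨ G.VicinalLE v u)
    {S : Finset V} (hS : S.Nonempty) :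
    ∃ v ∈ S, (∀ w ∈ S, w ≠ v → ¬ G.Adj v w) ∨ (∀ w ∈ S, w ≠ v → G.Adj v w) := by
  let : LE V := ⟨G.VicinalLE⟩
  have : IsTrans V (· ≤ ·) := ⟨fun _ _ _ => VicinalLE.trans⟩
  obtain ⟨m, hmS, hmax⟩ := S.exists_maximal hS
  have hle : ∀ u ∈ S, G.VicinalLE u m := fun u hu => (htot u m).elim id (hmax hu)
  by_cases hdom : ∀ w ∈ S, w ≠ m → G.Adj m w
  · exact ⟨m, hmS, .inr hdom⟩
  · push Not at hdom
    obtain ⟨u, huS, hum, hmu⟩ := hdom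
    exact ⟨u, huS, .inl fun w hwS _ huw => hmu (hle w hwS u hum huw.symm)⟩

end SimpleGraph

theorem Finset.exists_embedding_fin_forall_map_Iic {α : Type*} (P : Finset α → α → Prop)
    (hP : ∀ S : Finset α, S.Nonempty → ∃ a ∈ S, P S a) {n : ℕ} {S : Finset α}
    (hS : S.card = n) :
    ∃ f : Fin n ↪ α, Set.range f = S ∧ ∀ i, P ((Finset.Iic i).map f) (f i) := by
  induction n generalizing S with
  | zero =>
    exact ⟨⟨Fin.elim0, fun i => i.elim0⟩, by simp [Finset.card_eq_zero.mp hS], fun i => i.elim0⟩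
  | succ n ih =>
    obtain ⟨a, haS, hPa⟩ := hP S (Finset.card_pos.mp (by omega))
    obtain ⟨f, hfS, hf⟩ := ih (S := S.erase a) (by simp [Finset.card_erase_of_mem haS, hS])
    have ha : a ∉ Set.range f := by simp [hfS]
    have hrange : Set.range (Fin.Embedding.snoc f ha) = S := by simp [hfS, haS]
    refine ⟨Fin.Embedding.snoc f ha, hrange, fun i => ?_⟩
    induction i using Fin.lastCases with
    | last =>
      have hIic : Finset.Iic (Fin.last n) = Finset.univ := by ext; simp [Fin.le_last]
      have hmap : Finset.univ.map (Fin.Embedding.snoc f ha) = S := by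
        rw [← Finset.coe_inj, Finset.coe_map, Finset.coe_univ, Set.image_univ, hrange]
      rwa [hIic, hmap, Fin.Embedding.snoc_last]
    | cast j =>
      have hmap : (Finset.Iic j.castSucc).map (Fin.Embedding.snoc f ha) =
          (Finset.Iic j).map f := by
        rw [← Fin.map_castSuccEmb_Iic, Finset.map_map]
        congr 1
        ext; simp [Fin.Embedding.snoc_castSucc]
      rw [hmap, Fin.Embedding.snoc_castSucc]
      exact hf j

theorem Fintype.exists_equiv_fin_forall_map_Iic {α : Type*} [Fintype α]
    (P : Finset α → α → Prop) (hP : ∀ S : Finset α, S.Nonempty → ∃ a ∈ S, P S a) :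
    ∃ e : Fin (Fintype.card α) ≃ α, ∀ i, P ((Finset.Iic i).map e.toEmbedding) (e i) := by
  obtain ⟨f, hf, hPf⟩ := Finset.exists_embedding_fin_forall_map_Iic P hP Finset.card_univ
  exact ⟨Equiv.ofBijective f ⟨f.injective, Set.range_eq_univ.mp (by simpa using hf)⟩, hPf⟩

theorem SimpleGraph.isThresholdGraph_of_vicinalLE_total {V : Type*} [Fintype V]
    {G : SimpleGraph V} (htot : ∀ u v, G.VicinalLE u v ∨ G.VicinalLE v u) :
    G.IsThresholdGraph := by
  obtain ⟨e, he⟩ := Fintype.exists_equiv_fin_forall_map_Iic _ fun S hS =>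
    G.exists_isolated_or_dominating htot hS
  refine ⟨e, fun i => (he i).imp (fun h j hji => h _ ?_ ?_) (fun h j hji => h _ ?_ ?_)⟩ <;>
    first
    | exact (Finset.mem_map' _).2 (Finset.mem_Iic.2 hji.le)
    | exact e.injective.ne hji.ne

lemma injective_vec_four {α : Type*} {a b c d : α} (hab : a ≠ b) (hac : a ≠ c) (had : a ≠ d)
    (hbc : b ≠ c) (hbd : b ≠ d) (hcd : c ≠ d) : Function.Injective ![a, b, c, d] := by
  simp [Function.Injective, Fin.forall_fin_succ, hab, hac, had, hbc, hbd, hcd, hab.symm,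
    hac.symm, had.symm, hbc.symm, hbd.symm, hcd.symm]

lemma even_card_filter_range_four_iff (f : ℕ → Bool) :
    Even ((Finset.range 4).filter fun k => f k = true).card ↔
      (f 0 ^^ f 1 ^^ f 2 ^^ f 3) = false := by
  simp only [Finset.card_filter, Finset.sum_range_succ, Finset.sum_range_zero]
  cases f 0 <;> cases f 1 <;> cases f 2 <;> cases f 3 <;> decide

lemma even_card_filter_Ico_add_two_add_cond_iff (f : ℕ → Bool) (i : ℕ) (s : Bool) :
    Even (((Finset.Ico i (i + 2)).filter fun k => f k = true).card + cond s 1 0) ↔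
      (f i ^^ f (i + 1) ^^ s) = false := by
  simp only [Finset.card_filter, Finset.sum_Ico_eq_sum_range, Nat.add_sub_cancel_left,
    Finset.sum_range_succ, Finset.sum_range_zero, add_zero]
  cases f i <;> cases f (i + 1) <;> cases s <;> decide

namespace SignedGraph

variable {V : Type*} {G : SignedGraph V} {s : Bool} {u v : V} {a b c d : V} {α β γ δ : Bool}

lemma EdgeAdj.symm (h : G.EdgeAdj s u v) : G.EdgeAdj s v u := by
  cases s <;> exact SimpleGraph.Adj.symm h

lemma EdgeAdj.ne (h : G.EdgeAdj s u v) : u ≠ v := by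
  cases s <;> exact SimpleGraph.Adj.ne h

lemma edgeAdj_comm : G.EdgeAdj s u v ↔ G.EdgeAdj s v u := ⟨EdgeAdj.symm, EdgeAdj.symm⟩

lemma inf_adj_iff_forall_edgeAdj : (G.pos ⊓ G.neg).Adj u v ↔ ∀ s, G.EdgeAdj s u v := by
  simp [EdgeAdj, Bool.forall_bool]

lemma exists_edgeAdj (hcomp : G.pos ⊔ G.neg = ⊤) (huv : u ≠ v) : ∃ s, G.EdgeAdj s u v := by
  have : (G.pos ⊔ G.neg).Adj u v := hcomp ▸ huv
  simpa [EdgeAdj, Bool.exists_bool, or_comm] using this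

lemma forall_edgeAdj_or_exists_sign (hcomp : G.pos ⊔ G.neg = ⊤) (huv : u ≠ v) :
    (∀ s, G.EdgeAdj s u v) ∨ ∃ α, ∀ s, G.EdgeAdj s u v ↔ s = α := by
  obtain ⟨α, hα⟩ := exists_edgeAdj hcomp huv
  by_cases hβ : G.EdgeAdj (!α) u v
  · exact .inl fun s => by cases s <;> cases α <;> simp_all
  · exact .inr ⟨α, fun s => ⟨fun hs => by cases s <;> cases α <;> simp_all, fun h => h ▸ hα⟩⟩

lemma switch_edgeAdj (ν : V → Bool) :
    (G.switch ν).EdgeAdj s u v ↔ G.EdgeAdj (s ^^ (ν u ^^ ν v)) u v := by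
  cases s <;> cases hu : ν u <;> cases hv : ν v <;>
    simp [switch, EdgeAdj, hu, hv, G.pos.adj_comm v u, G.neg.adj_comm v u] <;>
    exact SimpleGraph.Adj.ne

lemma hasInducedCopy_of_edgeAdj_iff {W : Type*} {H : SignedGraph W} (f : W → V)
    (hf : Function.Injective f) (h : ∀ s a b, G.EdgeAdj s (f a) (f b) ↔ H.EdgeAdj s a b) :
    G.HasInducedCopy H :=
  ⟨f, hf, h false, h true⟩

lemma BalancedChordal.exists_chord_of_square (hI : G.BalancedChordal) {s₀ s₁ s₂ s₃ : Bool}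
    (h₀ : G.EdgeAdj s₀ a b) (h₁ : G.EdgeAdj s₁ b c) (h₂ : G.EdgeAdj s₂ c d)
    (h₃ : G.EdgeAdj s₃ d a) (hac : a ≠ c) (hbd : b ≠ d)
    (hbal : (s₀ ^^ s₁ ^^ s₂ ^^ s₃) = false) :
    (∃ s, G.EdgeAdj s a c ∧ (s₀ ^^ s₁ ^^ s) = false) ∨
      (∃ s, G.EdgeAdj s b d ∧ (s₁ ^^ s₂ ^^ s) = false) := by
  have hinj := injective_vec_four h₀.ne hac h₃.ne.symm h₁.ne hbd h₂.ne
  let C : G.Cycle :=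
    { n := 4
      three_le := by norm_num
      vert := fun i => ![a, b, c, d] (Fin.ofNat 4 i)
      inj := fun i j hi hj hij => by
        simpa [Fin.ext_iff, Nat.mod_eq_of_lt hi, Nat.mod_eq_of_lt hj] using hinj hij
      sgn := fun i => ![s₀, s₁, s₂, s₃] (Fin.ofNat 4 i)
      adj := fun i hi => by interval_cases i <;> simpa }
  obtain ⟨i, j, s, hij, ⟨hi, hj, -, hj', hi', -⟩, hs, heven, -⟩ :=
    hI C le_rfl ((even_card_filter_range_four_iff C.sgn).2 hbal)
  change i < 4 at hi
  change j < 4 at hj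
  change j ≠ (i + 1) % 4 at hj'
  change i ≠ (j + 1) % 4 at hi'
  obtain ⟨rfl, rfl⟩ | ⟨rfl, rfl⟩ : (i = 0 ∧ j = 2) ∨ (i = 1 ∧ j = 3) := by omega
  · exact .inl ⟨s, hs, (even_card_filter_Ico_add_two_add_cond_iff C.sgn 0 s).1 heven⟩
  · exact .inr ⟨s, hs, (even_card_filter_Ico_add_two_add_cond_iff C.sgn 1 s).1 heven⟩

lemma BalancedChordal.xor_eq_true_of_square (hI : G.BalancedChordal)
    (hab : ∀ s, G.EdgeAdj s a b) (hcd : ∀ s, G.EdgeAdj s c d)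
    (hac : ∀ s, G.EdgeAdj s a c ↔ s = α) (hbd : ∀ s, G.EdgeAdj s b d ↔ s = γ)
    (hbc : G.EdgeAdj β b c) (hda : G.EdgeAdj δ d a) :
    (α ^^ β ^^ γ ^^ δ) = true := by
  -- sign `ab` to unbalance the triangle `abc`, then `cd` to balance the square
  rcases hI.exists_chord_of_square (hab !(α ^^ β)) hbc (hcd (!α ^^ δ)) hda
      ((hac α).2 rfl).ne ((hbd γ).2 rfl).ne (by cases α <;> cases β <;> cases δ <;> decide)
    with ⟨s, hs, hbal⟩ | ⟨s, hs, hbal⟩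
  · rw [(hac s).1 hs] at hbal
    cases α <;> cases β <;> simp at hbal
  · rw [(hbd s).1 hs] at hbal
    cases α <;> cases β <;> cases γ <;> cases δ <;> simp_all

lemma hasInducedCopy_obstruction_switch
    (hab : ∀ s, G.EdgeAdj s a b) (hcd : ∀ s, G.EdgeAdj s c d)
    (hac : ∀ s, G.EdgeAdj s a c ↔ s = α) (hbd : ∀ s, G.EdgeAdj s b d ↔ s = γ)
    (hbc : ∀ s, G.EdgeAdj s b c ↔ s = β) (hda : ∀ s, G.EdgeAdj s d a ↔ s = δ)
    (hodd : (α ^^ β ^^ γ ^^ δ) = true) :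
    ∃ ν, G.HasInducedCopy (obstruction.switch ν) := by
  obtain rfl : γ = !(α ^^ β ^^ δ) := by
    cases α <;> cases β <;> cases γ <;> cases δ <;> simp_all
  -- switching by `ν` turns the signs of `G₀` on `02, 12, 13, 30` into `α, β, γ, δ`
  refine ⟨![false, !(α ^^ β), !α, δ], hasInducedCopy_of_edgeAdj_iff ![a, b, c, d]
    (injective_vec_four (hab true).ne ((hac α).2 rfl).ne ((hda δ).2 rfl).ne.symm
      ((hbc β).2 rfl).ne ((hbd _).2 rfl).ne (hcd true).ne) fun s x y => ?_⟩
  have hba : ∀ s, G.EdgeAdj s b a := fun s => (hab s).symm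
  have hdc : ∀ s, G.EdgeAdj s d c := fun s => (hcd s).symm
  have hca : ∀ s, G.EdgeAdj s c a ↔ s = α := fun s => edgeAdj_comm.trans (hac s)
  have hdb : ∀ s, G.EdgeAdj s d b ↔ s = !(α ^^ β ^^ δ) := fun s => edgeAdj_comm.trans (hbd s)
  have hcb : ∀ s, G.EdgeAdj s c b ↔ s = β := fun s => edgeAdj_comm.trans (hbc s)
  have had : ∀ s, G.EdgeAdj s a d ↔ s = δ := fun s => edgeAdj_comm.trans (hda s)
  rw [switch_edgeAdj]
  fin_cases x <;> fin_cases y <;>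
    simp only [Fin.reduceFinMk, Matrix.cons_val, hab, hba, hcd, hdc, hac, hca, hbd, hdb, hbc,
      hcb, hda, had] <;>
    cases α <;> cases β <;> cases δ <;> cases s <;> simp [EdgeAdj, obstruction]

theorem vicinalLE_inf_total (hcomp : G.pos ⊔ G.neg = ⊤) (hI : G.BalancedChordal)
    (hIII : G.NoInducedObstruction) (u v : V) :
    (G.pos ⊓ G.neg).VicinalLE u v ∨ (G.pos ⊓ G.neg).VicinalLE v u := by
  by_contra! h
  simp only [SimpleGraph.VicinalLE, not_forall] at h
  obtain ⟨⟨x, hxv, hux, hvx⟩, ⟨y, hyu, hvy, huy⟩⟩ := h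
  have hxy : x ≠ y := by rintro rfl; exact huy hux
  have hvu : v ≠ u := by rintro rfl; exact hvx hux
  obtain ⟨α, hα⟩ := (forall_edgeAdj_or_exists_sign hcomp hyu.symm).resolve_left
    (mt inf_adj_iff_forall_edgeAdj.2 huy)
  obtain ⟨γ, hγ⟩ := (forall_edgeAdj_or_exists_sign hcomp hxv).resolve_left
    (mt inf_adj_iff_forall_edgeAdj.2 fun hxv' => hvx hxv'.symm)
  have hux' := inf_adj_iff_forall_edgeAdj.1 hux
  have hyv := inf_adj_iff_forall_edgeAdj.1 hvy.symm
  have hodd : ∀ {β δ}, G.EdgeAdj β x y → G.EdgeAdj δ v u → (α ^^ β ^^ γ ^^ δ) = true :=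
    hI.xor_eq_true_of_square hux' hyv hα hγ
  rcases forall_edgeAdj_or_exists_sign hcomp hxy with hxy₂ | ⟨β, hβ⟩
  · obtain ⟨δ, hδ⟩ := exists_edgeAdj hcomp hvu
    have h₀ := hodd (hxy₂ false) hδ
    have h₁ := hodd (hxy₂ true) hδ
    cases α <;> cases γ <;> cases δ <;> simp_all
  rcases forall_edgeAdj_or_exists_sign hcomp hvu with hvu₂ | ⟨δ, hδ⟩
  · have h₀ := hodd ((hβ β).2 rfl) (hvu₂ false)
    have h₁ := hodd ((hβ β).2 rfl) (hvu₂ true)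
    cases α <;> cases β <;> cases γ <;> simp_all
  exact hIII (hasInducedCopy_obstruction_switch hux' hyv hα hγ hβ hδ
    (hodd ((hβ β).2 rfl) ((hδ δ).2 rfl)))

end SignedGraph

/-- **Proposition 4.1.** Suppose the underlying simple graph `G⁺ ∪ G⁻` is complete. If `G`
satisfies conditions (I) and (III), then the graph of double edges `G⁺ ∩ G⁻` is threshold. -/
theorem doubles_threshold {V : Type} [Fintype V] (G : SignedGraph V)
    (hcomp : G.pos ⊔ G.neg = ⊤)
    (hI : G.BalancedChordal) (hIII : G.NoInducedObstruction) :
    (G.pos ⊓ G.neg).IsThresholdGraph :=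
  SimpleGraph.isThresholdGraph_of_vicinalLE_total (G.vicinalLE_inf_total hcomp hI hIII)
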